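/- If vertex operator algebras V^1, \ldots, V^n are each C_2-cofinite, then the tensor product vertex operator algebra V^1 \otimes \cdots \otimes V^n is C_2-cofinite. More precisely, if V^i = C_2(V^i) + W^i with W^i finite dimensional, then V^1 \otimes \cdots \otimes V^n = C_2(V^1 \otimes \cdots \otimes V^n) + W^1 \otimes \cdots \otimes W^n. -/

import Mathlib

noncomputable section
open scoped BigOperators

/-- Generalized binomial coefficient `n choose i` for `n : ℤ`, valued in `ℂ`. -/
def zbinom (n : ℤ) (i : ℕ) : ℂ :=
  (∏ j ∈ Finset.range i, ((n : ℂ) - (j : ℂ))) / (Nat.factorial i : ℂ)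

/-- A vertex algebra over `ℂ`, presented by its modes `Y u n`, with truncation,
vacuum, creation, and the Borcherds (Jacobi) identity. -/
class VertexAlgebra (V : Type) [AddCommGroup V] [Module ℂ V] where
  Y : V → ℤ → Module.End ℂ V
  vac : V
  trunc : ∀ u v : V, ∃ N : ℤ, ∀ n : ℤ, N ≤ n → Y u n v = 0
  vac_act : ∀ (v : V) (n : ℤ), Y vac n v = if n = -1 then v else 0
  creation : ∀ u : V, Y u (-1) vac = u
  borcherds : ∀ (u v w : V) (p q r : ℤ),
    ∑ᶠ i : ℕ, zbinom p i • Y (Y u (r + i) v) (p + q - i) w =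
    ∑ᶠ i : ℕ, ((-1 : ℂ) ^ i * zbinom r i) •
      (Y u (p + r - i) (Y v (q + i) w) -
        ((-1 : ℂ) ^ r) • Y v (q + r - i) (Y u (p + i) w))

/-- A weak module over a vertex algebra: a vector space with modes satisfying
truncation, the vacuum axiom and the Borcherds (Jacobi) identity. -/
structure WeakModule (V : Type) [AddCommGroup V] [Module ℂ V] [VertexAlgebra V]
    (M : Type) [AddCommGroup M] [Module ℂ M] where
  act : V → ℤ → Module.End ℂ M
  trunc : ∀ (v : V) (m : M), ∃ N : ℤ, ∀ n : ℤ, N ≤ n → act v n m = 0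
  vac_act : ∀ (m : M) (n : ℤ), act (VertexAlgebra.vac (V := V)) n m = if n = -1 then m else 0
  borcherds : ∀ (u v : V) (w : M) (p q r : ℤ),
    ∑ᶠ i : ℕ, zbinom p i • act (VertexAlgebra.Y u (r + i) v) (p + q - i) w =
    ∑ᶠ i : ℕ, ((-1 : ℂ) ^ i * zbinom r i) •
      (act u (p + r - i) (act v (q + i) w) -
        ((-1 : ℂ) ^ r) • act v (q + r - i) (act u (p + i) w))

/-- A vertex operator algebra of CFT type: a vertex algebra with an
`L(0)`-grading supported in nonnegative degrees, `V₀ = ℂ𝟏`, finite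
dimensional graded pieces, and a conformal vector `ω`. -/
class CFTVertexOperatorAlgebra (V : Type) [AddCommGroup V] [Module ℂ V]
    extends VertexAlgebra V where
  grading : ℤ → Submodule ℂ V
  internal : DirectSum.IsInternal grading
  grading_neg : ∀ n : ℤ, n < 0 → grading n = ⊥
  cft : grading 0 = Submodule.span ℂ {vac}
  findim : ∀ n : ℤ, FiniteDimensional ℂ (grading n)
  ω : V
  ω_mem : ω ∈ grading 2
  mode_grade : ∀ (k m n : ℤ) (u v : V), u ∈ grading k → v ∈ grading m →
    Y u n v ∈ grading (k + m - n - 1)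
  translation : ∀ u : V, Y ω 0 u = Y u (-2) vac
  L0_grade : ∀ (n : ℤ) (v : V), v ∈ grading n → Y ω 1 v = (n : ℂ) • v

namespace VertexAlgebra

variable (V : Type) [AddCommGroup V] [Module ℂ V] [VertexAlgebra V]

/-- `C₂(V)`: the span of all `u₋₂ v`. -/
def C2 : Submodule ℂ V :=
  Submodule.span ℂ {x : V | ∃ u v : V, x = Y u (-2) v}

/-- `V` is `C₂`-cofinite if `V / C₂(V)` is finite dimensional. -/
def C2Cofinite : Prop := FiniteDimensional ℂ (V ⧸ C2 V)

end VertexAlgebra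

namespace WeakModule

variable {V : Type} [AddCommGroup V] [Module ℂ V] [VertexAlgebra V]
variable {M : Type} [AddCommGroup M] [Module ℂ M]

/-- `C₂(M)` for a weak module `M`: the span of all `u₋₂ m`. -/
def C2 (ρ : WeakModule V M) : Submodule ℂ M :=
  Submodule.span ℂ {x : M | ∃ (u : V) (m : M), x = ρ.act u (-2) m}

/-- `C₂` of a weak submodule `N`, as a submodule of the ambient module. -/
def C2Sub (ρ : WeakModule V M) (N : Submodule ℂ M) : Submodule ℂ M :=
  Submodule.span ℂ {x : M | ∃ (u : V), ∃ m ∈ N, x = ρ.act u (-2) m}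

/-- A subspace invariant under all modes, i.e. a weak submodule. -/
def Invariant (ρ : WeakModule V M) (N : Submodule ℂ M) : Prop :=
  ∀ (v : V) (n : ℤ), ∀ m ∈ N, ρ.act v n m ∈ N

/-- An irreducible (simple) weak module. -/
def Irreducible (ρ : WeakModule V M) : Prop :=
  (∃ m : M, m ≠ 0) ∧ ∀ N : Submodule ℂ M, ρ.Invariant N → N = ⊥ ∨ N = ⊤

/-- A simple weak submodule. -/
def SimpleSub (ρ : WeakModule V M) (N : Submodule ℂ M) : Prop :=
  ρ.Invariant N ∧ N ≠ ⊥ ∧ ∀ N' : Submodule ℂ M, N' ≤ N → ρ.Invariant N' → N' = ⊥ ∨ N' = N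

/-- The weak submodule generated by a set. -/
def genSub (ρ : WeakModule V M) (S : Set M) : Submodule ℂ M :=
  sInf {N : Submodule ℂ M | ρ.Invariant N ∧ S ⊆ N}

end WeakModule

namespace WeakModule

variable {V : Type} [AddCommGroup V] [Module ℂ V] [CFTVertexOperatorAlgebra V]
variable {M : Type} [AddCommGroup M] [Module ℂ M]

open CFTVertexOperatorAlgebra

/-- The set `Ω(M)` of lowest weight vectors of a weak module: vectors killed by
all modes of negative weight. -/
def lwSet (ρ : WeakModule V M) : Set M :=
  {w : M | ∀ (k n : ℤ) (v : V), v ∈ grading (V := V) k → k - n - 1 < 0 → ρ.act v n w = 0}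

/-- A weak module is admissible if it carries a `ℤ₊`-grading compatible with the
weights of the modes. -/
def Admissible (ρ : WeakModule V M) : Prop :=
  ∃ g : ℤ → Submodule ℂ M,
    (∀ n : ℤ, n < 0 → g n = ⊥) ∧ DirectSum.IsInternal g ∧
    ∀ (k m n : ℤ) (v : V), v ∈ grading (V := V) k →
      ∀ x ∈ g n, ρ.act v m x ∈ g (n + k - m - 1)

/-- An admissible weak submodule. -/
def AdmissibleSub (ρ : WeakModule V M) (N : Submodule ℂ M) : Prop :=
  ρ.Invariant N ∧
  ∃ g : ℤ → Submodule ℂ M,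
    (∀ n : ℤ, g n ≤ N) ∧ (∀ n : ℤ, n < 0 → g n = ⊥) ∧
    iSupIndep g ∧ (⨆ n, g n) = N ∧
    ∀ (k m n : ℤ) (v : V), v ∈ grading (V := V) k →
      ∀ x ∈ g n, ρ.act v m x ∈ g (n + k - m - 1)

/-- An ordinary weak module: a direct sum of finite dimensional `L(0)`-eigenspaces
with weights bounded below in each coset of `ℤ` in `ℂ`. -/
def Ordinary (ρ : WeakModule V M) : Prop :=
  ∃ g : ℂ → Submodule ℂ M,
    DirectSum.IsInternal g ∧
    (∀ μ : ℂ, FiniteDimensional ℂ (g μ)) ∧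
    (∀ μ : ℂ, ∀ m ∈ g μ, ρ.act (ω (V := V)) 1 m = μ • m) ∧
    ∀ μ : ℂ, ∃ N : ℤ, ∀ n : ℤ, n < N → g (μ + n) = ⊥

/-- An ordinary weak submodule. -/
def OrdinarySub (ρ : WeakModule V M) (N : Submodule ℂ M) : Prop :=
  ρ.Invariant N ∧
  ∃ g : ℂ → Submodule ℂ M,
    (∀ μ : ℂ, g μ ≤ N) ∧ iSupIndep g ∧ (⨆ μ, g μ) = N ∧
    (∀ μ : ℂ, FiniteDimensional ℂ (g μ)) ∧
    (∀ μ : ℂ, ∀ m ∈ g μ, ρ.act (ω (V := V)) 1 m = μ • m) ∧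
    ∀ μ : ℂ, ∃ Nb : ℤ, ∀ n : ℤ, n < Nb → g (μ + n) = ⊥

end WeakModule

/-- Rationality: every admissible weak module is a direct sum of simple
admissible submodules. -/
def Rational (V : Type) [AddCommGroup V] [Module ℂ V] [CFTVertexOperatorAlgebra V] : Prop :=
  ∀ (M : Type) [AddCommGroup M] [Module ℂ M] (ρ : WeakModule V M),
    ρ.Admissible →
    ∃ (ι : Type) (_ : DecidableEq ι) (S : ι → Submodule ℂ M), DirectSum.IsInternal S ∧
      ∀ i, ρ.SimpleSub (S i) ∧ ρ.AdmissibleSub (S i)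

/-- Regularity: every weak module is a direct sum of simple ordinary submodules. -/
def Regular (V : Type) [AddCommGroup V] [Module ℂ V] [CFTVertexOperatorAlgebra V] : Prop :=
  ∀ (M : Type) [AddCommGroup M] [Module ℂ M] (ρ : WeakModule V M),
    ∃ (ι : Type) (_ : DecidableEq ι) (S : ι → Submodule ℂ M), DirectSum.IsInternal S ∧
      ∀ i, ρ.SimpleSub (S i) ∧ ρ.OrdinarySub (S i)

end
open scoped TensorProduct
open PiTensorProduct in
/-- a tensor product of `C₂`-cofinite vertex operator algebras is
`C₂`-cofinite; more precisely, if `Vⁱ = C₂(Vⁱ) + Wⁱ` with `Wⁱ` finite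
dimensional, then `V¹ ⊗ ⋯ ⊗ Vⁿ = C₂(V¹ ⊗ ⋯ ⊗ Vⁿ) + W¹ ⊗ ⋯ ⊗ Wⁿ`. -/
theorem tensor_product_C2_cofinite
    (n : ℕ) (V : Fin n → Type)
    [∀ i, AddCommGroup (V i)] [∀ i, Module ℂ (V i)]
    [∀ i, CFTVertexOperatorAlgebra (V i)]
    (hC2 : ∀ i, VertexAlgebra.C2Cofinite (V i))
    -- the tensor product vertex operator algebra structure
    [VertexAlgebra (⨂[ℂ] i, V i)]
    (hvac : VertexAlgebra.vac (V := ⨂[ℂ] i, V i) =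
      tprod ℂ (fun i => VertexAlgebra.vac (V := V i)))
    (hY : ∀ (i : Fin n) (u : V i) (m : ℤ) (v : ∀ j, V j),
      VertexAlgebra.Y
          (tprod ℂ (Function.update (fun j => VertexAlgebra.vac (V := V j)) i u)) m
          (tprod ℂ v) =
        tprod ℂ (Function.update v i (VertexAlgebra.Y u m (v i))))
    -- finite dimensional complements of the `C₂` subspaces
    (W : ∀ i, Submodule ℂ (V i))
    (hWfin : ∀ i, FiniteDimensional ℂ (W i))
    (hWcompl : ∀ i, VertexAlgebra.C2 (V i) ⊔ W i = ⊤) :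
    FiniteDimensional ℂ ((⨂[ℂ] i, V i) ⧸ VertexAlgebra.C2 (⨂[ℂ] i, V i)) ∧
    VertexAlgebra.C2 (⨂[ℂ] i, V i) ⊔
        Submodule.span ℂ {x : ⨂[ℂ] i, V i |
          ∃ w : ∀ i, V i, (∀ i, w i ∈ W i) ∧ x = tprod ℂ w} = ⊤ := by
  classical
  set TV := ⨂[ℂ] i, V i
  set C := VertexAlgebra.C2 (⨂[ℂ] i, V i) with hC
  set SW := Submodule.span ℂ {x : ⨂[ℂ] i, V i |
      ∃ w : ∀ i, V i, (∀ i, w i ∈ W i) ∧ x = tprod ℂ w} with hSW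
  -- Lemma A: if one coordinate is in C₂ of that factor, the pure tensor is in C₂.
  have lemA : ∀ (i : Fin n) (v : ∀ j, V j) (x : V i), x ∈ VertexAlgebra.C2 (V i) →
      tprod ℂ (Function.update v i x) ∈ C := by
    intro i v x hx
    induction hx using Submodule.span_induction with
    | mem y hy =>
      obtain ⟨a, b, rfl⟩ := hy
      have : tprod ℂ (Function.update v i (VertexAlgebra.Y a (-2) b)) =
          VertexAlgebra.Y
            (tprod ℂ (Function.update (fun j => VertexAlgebra.vac (V := V j)) i a)) (-2)
            (tprod ℂ (Function.update v i b)) := by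
        rw [hY i a (-2) (Function.update v i b)]
        simp [Function.update_idem]
      rw [this]
      exact Submodule.subset_span ⟨_, _, rfl⟩
    | zero =>
      have : tprod ℂ (Function.update v i (0 : V i)) = 0 :=
        (tprod ℂ : MultilinearMap ℂ V (⨂[ℂ] i, V i)).map_coord_zero i (by simp)
      rw [this]; exact Submodule.zero_mem _
    | add y z _ _ hy hz =>
      rw [(tprod ℂ : MultilinearMap ℂ V (⨂[ℂ] i, V i)).map_update_add v i y z]
      exact Submodule.add_mem _ hy hz
    | smul c y _ hy =>
      rw [(tprod ℂ : MultilinearMap ℂ V (⨂[ℂ] i, V i)).map_update_smul v i c y]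
      exact Submodule.smul_mem _ _ hy
  -- every pure tensor lies in C ⊔ SW
  have key : ∀ v : ∀ i, V i, tprod ℂ v ∈ C ⊔ SW := by
    intro v
    have hdecomp : ∀ i, ∃ c ∈ VertexAlgebra.C2 (V i), ∃ w ∈ W i, v i = c + w := by
      intro i
      have : v i ∈ VertexAlgebra.C2 (V i) ⊔ W i := by rw [hWcompl i]; trivial
      obtain ⟨c, hc, w, hw, h⟩ := Submodule.mem_sup.mp this
      exact ⟨c, hc, w, hw, h.symm⟩
    choose c hc w hw hv using hdecomp
    have hveq : v = fun i => c i + w i := funext fun i => hv i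
    rw [hveq, show (fun i => c i + w i) = c + w from rfl,
      (tprod ℂ : MultilinearMap ℂ V (⨂[ℂ] i, V i)).map_add_univ c w]
    refine Submodule.sum_mem _ fun s _ => ?_
    by_cases hs : s = ∅
    · subst hs
      refine Submodule.mem_sup_right (Submodule.subset_span ?_)
      exact ⟨w, hw, by simp⟩
    · obtain ⟨i, hi⟩ := Finset.nonempty_iff_ne_empty.mpr hs
      refine Submodule.mem_sup_left ?_
      have : Finset.piecewise s c w = Function.update (Finset.piecewise s c w) i (c i) := by
        funext j
        by_cases hj : j = i
        · subst hj; simp [Finset.piecewise_eq_of_mem _ _ _ hi]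
        · simp [Function.update_of_ne hj]
      rw [this]
      exact lemA i _ _ (hc i)
  have htop : C ⊔ SW = ⊤ := by
    rw [eq_top_iff, ← PiTensorProduct.span_tprod_eq_top (R := ℂ) (s := V), Submodule.span_le]
    rintro _ ⟨v, rfl⟩
    exact key v
  -- SW is finite dimensional
  have hSWfin : FiniteDimensional ℂ SW := by
    haveI := hWfin
    set d : Fin n → ℕ := fun i => Module.finrank ℂ (W i)
    set B : ∀ i, Module.Basis (Fin (d i)) ℂ (W i) := fun i => Module.finBasis ℂ (W i)
    set b : ∀ i, Fin (d i) → V i := fun i j => (B i j : V i)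
    set g : (∀ i, Fin (d i)) → ⨂[ℂ] i, V i := fun f => tprod ℂ (fun i => b i (f i)) with hg
    have hle : SW ≤ Submodule.span ℂ (Set.range g) := by
      rw [hSW, Submodule.span_le]
      rintro _ ⟨w, hwW, rfl⟩
      set cf : ∀ i, Fin (d i) → ℂ := fun i j => (B i).repr ⟨w i, hwW i⟩ j
      have hw' : w = fun i => ∑ j : Fin (d i), cf i j • b i j := by
        funext i
        have := (B i).sum_repr ⟨w i, hwW i⟩
        calc w i = ((∑ j, (B i).repr ⟨w i, hwW i⟩ j • B i j : W i) : V i) := by rw [this]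
          _ = ∑ j : Fin (d i), cf i j • b i j := by
            push_cast [Submodule.coe_sum]
            rfl
      rw [hw', (tprod ℂ : MultilinearMap ℂ V (⨂[ℂ] i, V i)).map_sum]
      refine Submodule.sum_mem _ fun f _ => ?_
      rw [(tprod ℂ : MultilinearMap ℂ V (⨂[ℂ] i, V i)).map_smul_univ]
      exact Submodule.smul_mem _ _ (Submodule.subset_span ⟨f, rfl⟩)
    haveI : FiniteDimensional ℂ (Submodule.span ℂ (Set.range g)) :=
      FiniteDimensional.span_of_finite ℂ (Set.finite_range g)
    exact Submodule.finiteDimensional_of_le hle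
  refine ⟨?_, htop⟩
  -- the quotient is the image of SW
  have hsurj : Function.Surjective (C.mkQ.comp SW.subtype) := by
    intro q
    obtain ⟨x, rfl⟩ := Submodule.mkQ_surjective C q
    have hx : x ∈ C ⊔ SW := htop ▸ Submodule.mem_top
    obtain ⟨cx, hcx, y, hy, hxy⟩ := Submodule.mem_sup.mp hx
    refine ⟨⟨y, hy⟩, ?_⟩
    simp only [LinearMap.comp_apply, Submodule.subtype_apply, Submodule.mkQ_apply]
    rw [← hxy]
    rw [Submodule.Quotient.eq]
    simpa using hcx
  exact Module.Finite.of_surjective (C.mkQ.comp SW.subtype) hsurj
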